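/- If g₁, g₂ ∈ G₂ satisfy σ^i(g₁) ≠ g₂ for every i ∈ ℤ, then there exists m ≥ 1 such that for every i ∈ ℤ there is a ∈ 𝒢_m with a(σ^i(g₁)) ≠ a(g₂). -/

import Mathlib

/-- `G₂ := ⊕_{i ∈ ℤ} ℤ/2ℤ`, realized as finitely supported functions `ℤ →₀ ZMod 2`. -/
abbrev Gtwo : Type := ℤ →₀ ZMod 2

/-- `G₂` carries the discrete topology. -/
instance : TopologicalSpace Gtwo := ⊥
instance : DiscreteTopology Gtwo := ⟨rfl⟩

/-- The shift automorphism `σ` of `G₂`, `(σ g)(i) = g (i+1)`. -/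
def shiftAut : AddAut Gtwo := Finsupp.domCongr (Equiv.subRight (1 : ℤ))

/-- The Pontryagin dual `Ĝ₂` of `G₂`: continuous characters with values in the circle group,
with the compact-open topology. -/
abbrev DualGtwo : Type := PontryaginDual (Multiplicative Gtwo)

/-- `𝒢_m := { a ∈ Ĝ₂ : a ∘ σ^m = a }`. -/
def Gm (m : ℕ) : Set DualGtwo :=
  {a | ∀ g : Gtwo, a (Multiplicative.ofAdd ((m • shiftAut) g)) = a (Multiplicative.ofAdd g)}

/-- `𝒢 := ⋃_{m ≥ 1} 𝒢_m`. -/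
def curlyG : Set DualGtwo := ⋃ m ∈ {m : ℕ | 1 ≤ m}, Gm m


lemma shiftAut_apply (g : Gtwo) (x : ℤ) : shiftAut g x = g (x + 1) := by
  simp [shiftAut, Finsupp.domCongr_apply]

lemma shift_nat_apply (n : ℕ) (g : Gtwo) (x : ℤ) : (n • shiftAut) g x = g (x + n) := by
  induction n generalizing g x with
  | zero => simp
  | succ k ih =>
    rw [succ_nsmul, AddAut.add_apply, ih, shiftAut_apply]
    congr 1; push_cast; ring

lemma shift_apply (a : ℤ) (g : Gtwo) (x : ℤ) : (a • shiftAut) g x = g (x + a) := by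
  cases a with
  | ofNat n => rw [Int.ofNat_eq_natCast, natCast_zsmul, shift_nat_apply]
  | negSucc n =>
    set u := ((Int.negSucc n) • shiftAut) g with hu
    have key : ((n+1) • shiftAut) u = g := by
      rw [hu, ← natCast_zsmul shiftAut (n+1), ← AddAut.add_apply, ← add_zsmul]
      norm_num [Int.negSucc_eq]
    have h2 := shift_nat_apply (n+1) u (x + Int.negSucc n)
    rw [key] at h2
    rw [show x + Int.negSucc n + ((n:ℕ)+1 : ℕ) = x by simp [Int.negSucc_eq]; ring] at h2
    rw [← h2]

noncomputable def fold (m : ℕ) : Gtwo →+ (ZMod m →₀ ZMod 2) :=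
  Finsupp.mapDomain.addMonoidHom (Int.cast)

lemma fold_apply (m : ℕ) (g : Gtwo) : fold m g = Finsupp.mapDomain (Int.cast) g := rfl

lemma shift_eq_mapDomain (a : ℤ) (g : Gtwo) :
    (a • shiftAut) g = Finsupp.mapDomain (· - a) g := by
  ext y
  have hinj : Function.Injective (fun x : ℤ => x - a) := fun x y hxy => by
    dsimp at hxy; omega
  have h2 := Finsupp.mapDomain_apply hinj g (y + a)
  simp only [add_sub_cancel_right] at h2
  rw [shift_apply, h2]

lemma fold_shift (m : ℕ) (a : ℤ) (g : Gtwo) :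
    fold m ((a • shiftAut) g) = Finsupp.mapDomain (· - (a : ZMod m)) (fold m g) := by
  rw [shift_eq_mapDomain, fold_apply, fold_apply, ← Finsupp.mapDomain_comp,
    ← Finsupp.mapDomain_comp]
  congr 1
  funext x
  simp [Function.comp]

lemma fold_shift_mul (m : ℕ) (k : ℤ) (g : Gtwo) :
    fold m (((k * m) • shiftAut) g) = fold m g := by
  rw [fold_shift]
  have : ((k * m : ℤ) : ZMod m) = 0 := by
    push_cast
    simp [ZMod.natCast_self]
  rw [this]
  simp only [sub_zero]
  exact Finsupp.mapDomain_id (v := fold m g)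

lemma castInjOn (m : ℕ) (S : Set ℤ) (hS : ∀ x ∈ S, ∀ y ∈ S, (x - y).natAbs < m) :
    Set.InjOn (Int.cast : ℤ → ZMod m) S := by
  intro x hx y hy hxy
  rw [ZMod.intCast_eq_intCast_iff] at hxy
  have hd : (m : ℤ) ∣ y - x := hxy.dvd
  have hlt : |y - x| < m := by
    have := hS x hx y hy
    rw [abs_sub_comm, Int.abs_eq_natAbs]
    omega
  have := Int.eq_zero_of_abs_lt_dvd hd hlt
  omega

noncomputable def chi (m : ℕ) [NeZero m] (r : ZMod m) : DualGtwo :=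
  { toMonoidHom :=
      (ZMod.toCircle.compAddMonoidHom ((Finsupp.applyAddHom r).comp (fold m))).toMonoidHom
    continuous_toFun := continuous_of_discreteTopology }

lemma chi_apply (m : ℕ) [NeZero m] (r : ZMod m) (g : Gtwo) :
    chi m r (Multiplicative.ofAdd g) = ZMod.toCircle (fold m g r) := rfl

lemma chi_mem (m : ℕ) [NeZero m] (r : ZMod m) : chi m r ∈ Gm m := by
  intro g
  rw [chi_apply, chi_apply]
  congr 1
  have : (m • shiftAut) g = (((1 : ℤ) * m) • shiftAut) g := by
    rw [one_mul, natCast_zsmul]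
  rw [this, fold_shift_mul]

lemma fold_ne (g₁ g₂ : Gtwo) (h : ∀ i : ℤ, (i • shiftAut) g₁ ≠ g₂) (N : ℕ)
    (h₁ : ∀ x ∈ g₁.support, x.natAbs ≤ N) (h₂ : ∀ x ∈ g₂.support, x.natAbs ≤ N)
    (i : ℤ) : fold (4*N+2) ((i • shiftAut) g₁) ≠ fold (4*N+2) g₂ := by
  classical
  set m : ℕ := 4*N+2 with hm
  intro heq
  set w : Gtwo := (i • shiftAut) g₁ with hwdef
  have hw_supp : ∀ x ∈ w.support, (x + i).natAbs ≤ N := by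
    intro x hx
    rw [Finsupp.mem_support_iff, hwdef, shift_apply] at hx
    exact h₁ _ (Finsupp.mem_support_iff.mpr hx)
  rcases eq_or_ne g₂ 0 with rfl | hg2
  · rcases eq_or_ne g₁ 0 with rfl | hg1
    · exact h 0 (by simp)
    · obtain ⟨x₁, hx₁⟩ := Finsupp.support_nonempty_iff.mpr hg1
      have hw1 : w (x₁ - i) ≠ 0 := by
        rw [hwdef, shift_apply, sub_add_cancel]
        exact Finsupp.mem_support_iff.mp hx₁
      have hS : Set.InjOn (Int.cast : ℤ → ZMod m) {x : ℤ | (x + i).natAbs ≤ N} := by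
        apply castInjOn
        intro x hx y hy
        simp only [Set.mem_setOf_eq] at hx hy
        omega
      have hval : fold m w ((x₁ - i : ℤ) : ZMod m) = w (x₁ - i) := by
        rw [fold_apply]
        refine Finsupp.mapDomain_apply' _ _ (fun x hx => hw_supp x hx) hS ?_
        show (x₁ - i + i).natAbs ≤ N
        rw [sub_add_cancel]
        exact h₁ _ hx₁
      rw [heq, map_zero] at hval
      simp only [Finsupp.coe_zero, Pi.zero_apply] at hval
      exact hw1 hval.symm
  · obtain ⟨x₀, hx₀⟩ := Finsupp.support_nonempty_iff.mpr hg2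
    have hS₂ : Set.InjOn (Int.cast : ℤ → ZMod m) {x : ℤ | x.natAbs ≤ N} := by
      apply castInjOn
      intro x hx y hy
      simp only [Set.mem_setOf_eq] at hx hy
      omega
    have hfg₂ : fold m g₂ ((x₀ : ZMod m)) = g₂ x₀ := by
      rw [fold_apply]
      exact Finsupp.mapDomain_apply' _ _ (fun x hx => h₂ x hx) hS₂ (h₂ _ hx₀)
    have hne0 : fold m w ((x₀ : ZMod m)) ≠ 0 := by
      rw [heq, hfg₂]; exact Finsupp.mem_support_iff.mp hx₀
    have hmem : ((x₀ : ℤ) : ZMod m) ∈ (Finsupp.mapDomain (Int.cast) w).support := by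
      rw [← fold_apply]; exact Finsupp.mem_support_iff.mpr hne0
    obtain ⟨y₀, hy₀, hy₀e⟩ := Finset.mem_image.mp (Finsupp.mapDomain_support hmem)
    have hdvd : (m : ℤ) ∣ x₀ - y₀ := (ZMod.intCast_eq_intCast_iff _ _ _ |>.mp hy₀e).dvd
    obtain ⟨k, hk⟩ := hdvd
    set a : ℤ := i + (-k) * m with hadef
    set w' : Gtwo := (a • shiftAut) g₁ with hw'def
    have hw'w : w' = (((-k) * m) • shiftAut) w := by
      ext x
      rw [hw'def, hwdef, shift_apply, shift_apply, shift_apply]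
      congr 1
      ring
    have hfold' : fold m w' = fold m g₂ := by
      rw [hw'w, fold_shift_mul, heq]
    have hx₀a : x₀ + a = y₀ + i := by linear_combination hk
    have hx₀w' : w' x₀ ≠ 0 := by
      rw [hw'def, shift_apply, hx₀a, ← shift_apply i g₁ y₀, ← hwdef]
      exact Finsupp.mem_support_iff.mp hy₀
    have hw'_supp : ∀ x ∈ w'.support, (x + a).natAbs ≤ N := by
      intro x hx
      rw [Finsupp.mem_support_iff, hw'def, shift_apply] at hx
      exact h₁ _ (Finsupp.mem_support_iff.mpr hx)
    have hx₀N' : (x₀ + a).natAbs ≤ N := hw'_supp x₀ (Finsupp.mem_support_iff.mpr hx₀w')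
    have hx₀N : x₀.natAbs ≤ N := h₂ _ hx₀
    set S : Set ℤ := {x | (x - x₀).natAbs ≤ 2*N} with hSdef
    have hSinj : Set.InjOn (Int.cast : ℤ → ZMod m) S := by
      apply castInjOn
      intro x hx y hy
      simp only [hSdef, Set.mem_setOf_eq] at hx hy
      omega
    have hw'S : (w'.support : Set ℤ) ⊆ S := by
      intro x hx
      have := hw'_supp x hx
      simp only [hSdef, Set.mem_setOf_eq]
      omega
    have hg₂S : (g₂.support : Set ℤ) ⊆ S := by
      intro x hx
      have := h₂ x hx
      simp only [hSdef, Set.mem_setOf_eq]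
      omega
    have : w' = g₂ := by
      refine Finsupp.mapDomain_injOn S hSinj hw'S hg₂S ?_
      rw [← fold_apply, ← fold_apply]
      exact hfold'
    exact h a this

/-- If `σ^i(g₁) ≠ g₂` for every `i ∈ ℤ`, then there exists `m ≥ 1` such that
for every `i ∈ ℤ` there is `a ∈ 𝒢_m` with `a(σ^i(g₁)) ≠ a(g₂)`. -/
theorem stmt_6 (g₁ g₂ : Gtwo) (h : ∀ i : ℤ, (i • shiftAut) g₁ ≠ g₂) :
    ∃ m : ℕ, 1 ≤ m ∧ ∀ i : ℤ, ∃ a ∈ Gm m,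
      a (Multiplicative.ofAdd ((i • shiftAut) g₁)) ≠ a (Multiplicative.ofAdd g₂) := by
  classical
  set N : ℕ := (g₁.support ∪ g₂.support).sup Int.natAbs with hN
  have h₁ : ∀ x ∈ g₁.support, x.natAbs ≤ N := fun x hx =>
    Finset.le_sup (Finset.mem_union_left _ hx)
  have h₂ : ∀ x ∈ g₂.support, x.natAbs ≤ N := fun x hx =>
    Finset.le_sup (Finset.mem_union_right _ hx)
  haveI : NeZero (4*N+2) := ⟨by omega⟩
  refine ⟨4*N+2, by omega, fun i => ?_⟩
  obtain ⟨r, hr⟩ := Finsupp.ne_iff.mp (fold_ne g₁ g₂ h N h₁ h₂ i)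
  refine ⟨chi (4*N+2) r, chi_mem _ _, ?_⟩
  rw [chi_apply, chi_apply]
  exact fun e => hr (ZMod.injective_toCircle e)
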